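/- Under the decomposition above, ℳ^𝒟_α(g₁,g₂)(x) is comparable (with dimensional constants depending on n and α) to ∑_{k,j} (|Q_j^k|^{-(2-α/n)} ∫_{Q_j^k} g₁ ∫_{Q_j^k} g₂) · 1_{E(Q_j^k)}(x) for a.e. x with ℳ^𝒟_α(g₁,g₂)(x) > 0, where E(Q_j^k) = Q_j^k \ Ω_{k+1}. -/

import Mathlib

open MeasureTheory ENNReal Set
open scoped BigOperators

noncomputable section

abbrev Rn (n : ℕ) := Fin n → ℝ

/-- An axis-parallel half-open cube with corner `c` and side length `l`. -/
def cube {n : ℕ} (c : Rn n) (l : ℝ) : Set (Rn n) :=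
  {x | ∀ i, c i ≤ x i ∧ x i < c i + l}

/-- `σ(Q) = ∫_Q σ dx`. -/
def wtI {n : ℕ} (σ : Rn n → ℝ≥0∞) (Q : Set (Rn n)) : ℝ≥0∞ := ∫⁻ x in Q, σ x

/-- `𝔼^σ_Q f = σ(Q)⁻¹ ∫_Q f σ`. -/
def avgE {n : ℕ} (σ f : Rn n → ℝ≥0∞) (Q : Set (Rn n)) : ℝ≥0∞ :=
  (wtI σ Q)⁻¹ * ∫⁻ x in Q, f x * σ x

/-- The cube `2^{-k}([0,1)ⁿ + m + (-1)^k t)` of the shifted dyadic grid. -/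
def gridCube (n : ℕ) (k : ℤ) (m : Fin n → ℤ) (t : Fin n → ℝ) : Set (Rn n) :=
  {x | ∀ i, (2:ℝ) ^ (-k) * ((m i : ℝ) + (-1:ℝ) ^ k * t i) ≤ x i ∧
       x i < (2:ℝ) ^ (-k) * ((m i : ℝ) + (-1:ℝ) ^ k * t i + 1)}

/-- The shifted dyadic grid `𝒟_t`. -/
def shiftedGrid (n : ℕ) (t : Fin n → ℝ) : Set (Set (Rn n)) :=
  {Q | ∃ (k : ℤ) (m : Fin n → ℤ), Q = gridCube n k m t}

/-- Abstract dyadic grid: cubes of dyadic side lengths, nested or disjoint,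
and for each scale the cubes of that side length cover `ℝⁿ`. -/
def IsDyadicGrid {n : ℕ} (𝒟 : Set (Set (Rn n))) : Prop :=
  (∀ Q ∈ 𝒟, ∃ (c : Rn n) (k : ℤ), Q = cube c ((2:ℝ) ^ k)) ∧
  (∀ Q ∈ 𝒟, ∀ R ∈ 𝒟, Q ∩ R = Q ∨ Q ∩ R = R ∨ Q ∩ R = ∅) ∧
  (∀ k : ℤ, (⋃ Q ∈ {Q | Q ∈ 𝒟 ∧ ∃ c : Rn n, Q = cube c ((2:ℝ) ^ k)}, Q) = univ)

/-- The multilinear fractional maximal operator `ℳ_α`. -/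
def MM (n m : ℕ) (α : ℝ) (g : Fin m → Rn n → ℝ≥0∞) (x : Rn n) : ℝ≥0∞ :=
  ⨆ (c : Rn n) (l : ℝ) (_ : 0 < l) (_ : x ∈ cube c l),
    ∏ i, (volume (cube c l) ^ (-(1 - α / ((m : ℝ) * (n : ℝ)))) * ∫⁻ y in cube c l, g i y)

/-- The multilinear fractional maximal operator restricted to a grid `𝒟`. -/
def MMD (n m : ℕ) (α : ℝ) (𝒟 : Set (Set (Rn n))) (g : Fin m → Rn n → ℝ≥0∞)
    (x : Rn n) : ℝ≥0∞ :=
  ⨆ (Q : Set (Rn n)) (_ : Q ∈ 𝒟) (_ : x ∈ Q),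
    ∏ i, (volume Q ^ (-(1 - α / ((m : ℝ) * (n : ℝ)))) * ∫⁻ y in Q, g i y)

/-- The bilinear fractional maximal operator `ℳ_α(g₁,g₂)`. -/
def M2 (n : ℕ) (α : ℝ) (g₁ g₂ : Rn n → ℝ≥0∞) (x : Rn n) : ℝ≥0∞ :=
  ⨆ (c : Rn n) (l : ℝ) (_ : 0 < l) (_ : x ∈ cube c l),
    (volume (cube c l) ^ (-(1 - α / (2 * (n : ℝ)))) * ∫⁻ y in cube c l, g₁ y) *
      (volume (cube c l) ^ (-(1 - α / (2 * (n : ℝ)))) * ∫⁻ y in cube c l, g₂ y)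

/-- The bilinear dyadic fractional maximal operator `ℳ^𝒟_α(g₁,g₂)`. -/
def M2D (n : ℕ) (α : ℝ) (𝒟 : Set (Set (Rn n))) (g₁ g₂ : Rn n → ℝ≥0∞) (x : Rn n) : ℝ≥0∞ :=
  ⨆ (Q : Set (Rn n)) (_ : Q ∈ 𝒟) (_ : x ∈ Q),
    (volume Q ^ (-(1 - α / (2 * (n : ℝ)))) * ∫⁻ y in Q, g₁ y) *
      (volume Q ^ (-(1 - α / (2 * (n : ℝ)))) * ∫⁻ y in Q, g₂ y)

/-- Sawyer's bilinear testing constant `[w⃗,v]_{S_{P⃗,q}}`. -/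
def sawyer2 (n : ℕ) (α p₁ p₂ q : ℝ) (σ₁ σ₂ v : Rn n → ℝ≥0∞) : ℝ≥0∞ :=
  ⨆ (c : Rn n) (l : ℝ) (_ : 0 < l),
    (∫⁻ x in cube c l,
        M2 n α ((cube c l).indicator σ₁) ((cube c l).indicator σ₂) x ^ q * v x) ^ (1/q) /
      (wtI σ₁ (cube c l) ^ (1/p₁) * wtI σ₂ (cube c l) ^ (1/p₂))

/-- Sawyer's multilinear testing constant. -/
def sawyerM (n m : ℕ) (α q : ℝ) (p : Fin m → ℝ) (σ : Fin m → Rn n → ℝ≥0∞)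
    (v : Rn n → ℝ≥0∞) : ℝ≥0∞ :=
  ⨆ (c : Rn n) (l : ℝ) (_ : 0 < l),
    (∫⁻ x in cube c l, MM n m α (fun i => (cube c l).indicator (σ i)) x ^ q * v x) ^ (1/q) /
      ∏ i, wtI (σ i) (cube c l) ^ (1 / p i)

/-- The principal cubes of `f` relative to `σ` inside `Qbar`, generation by generation. -/
def principalCubes {n : ℕ} (𝒟 : Set (Set (Rn n))) (σ f : Rn n → ℝ≥0∞)
    (Qbar : Set (Rn n)) : ℕ → Set (Set (Rn n))
  | 0 => {Qbar}
  | k + 1 => {G' | G' ∈ 𝒟 ∧ ∃ G ∈ principalCubes 𝒟 σ f Qbar k, G' ⊆ G ∧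
      4 * avgE σ f G < avgE σ f G' ∧
      ∀ G'' ∈ 𝒟, G' ⊆ G'' → G'' ⊆ G → 4 * avgE σ f G < avgE σ f G'' → G'' = G'}

/-!
Write `s = 2 - α/n ∈ (0, 2]`, so that the summand of the cube `Q` is
`fracAvg Q = |Q|^{-s} ∫_Q g₁ ∫_Q g₂`. The key estimate is that `λ |Q|^s ≤ ∫_Q g₁ ∫_Q g₂` passes
from the cubes of a disjoint family to their union (take square roots, then use subadditivity
of `t ↦ t^{s/2}` and Cauchy–Schwarz). Applied to the maximal cubes with `fracAvg > λ` it gives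
the weak-type bound `λ |Ω_λ|^s ≤ ‖g₁‖₁ ‖g₂‖₁`, so `ℳ < ∞` a.e. and every cube inside `Ω_λ` lies
in a maximal one; applied to a maximal cube `Q` of `Ω_λ` it gives `λ ≤ fracAvg Q`.
If `a^k < ℳ(x) ≤ a^{k+1}`, the only summand that sees `x` is the maximal cube `Q` of `Ω_k`
containing `x`, and `a^k ≤ fracAvg Q ≤ ℳ(x) ≤ a^{k+1}`: the comparison holds with `c = a⁻¹`
and `C = 1`.
-/

open Function

namespace ENNReal

variable {ι : Type*}

theorem rpow_tsum_le_tsum_rpow {p : ℝ} (hp0 : 0 < p) (hp1 : p ≤ 1) (a : ι → ℝ≥0∞) :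
    (∑' i, a i) ^ p ≤ ∑' i, a i ^ p := by
  have hfin (s : Finset ι) : (∑ i ∈ s, a i) ^ p ≤ ∑ i ∈ s, a i ^ p := by
    induction s using Finset.cons_induction with
    | empty => simp [zero_rpow_of_pos hp0]
    | cons j s _ ih =>
      rw [Finset.sum_cons, Finset.sum_cons]
      exact (rpow_add_le_add_rpow _ _ hp0.le hp1).trans (add_le_add_right ih _)
  exact le_of_tendsto' ((continuous_rpow_const.tendsto _).comp ENNReal.summable.hasSum)
    fun s => (hfin s).trans (ENNReal.sum_le_tsum s)

theorem tsum_mul_rpow_half_le (a b : ι → ℝ≥0∞) :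
    ∑' i, (a i * b i) ^ (1 / 2 : ℝ) ≤ (∑' i, a i) ^ (1 / 2 : ℝ) * (∑' i, b i) ^ (1 / 2 : ℝ) := by
  have hsq (x : ℝ≥0∞) : (x ^ (1 / 2 : ℝ)) ^ (2 : ℝ) = x := by
    rw [← rpow_mul]; norm_num
  rw [ENNReal.tsum_eq_iSup_sum]
  refine iSup_le fun s => ?_
  have hcs := inner_le_Lp_mul_Lq s (fun i => a i ^ (1 / 2 : ℝ)) (fun i => b i ^ (1 / 2 : ℝ))
    Real.HolderConjugate.two_two
  simp only [hsq] at hcs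
  calc ∑ i ∈ s, (a i * b i) ^ (1 / 2 : ℝ)
      = ∑ i ∈ s, a i ^ (1 / 2 : ℝ) * b i ^ (1 / 2 : ℝ) := by
        simp only [mul_rpow_of_nonneg _ _ (by norm_num : (0 : ℝ) ≤ 1 / 2)]
    _ ≤ (∑ i ∈ s, a i) ^ (1 / 2 : ℝ) * (∑ i ∈ s, b i) ^ (1 / 2 : ℝ) := hcs
    _ ≤ (∑' i, a i) ^ (1 / 2 : ℝ) * (∑' i, b i) ^ (1 / 2 : ℝ) := by
        gcongr <;> exact ENNReal.sum_le_tsum s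

theorem mul_tsum_rpow_le_tsum_mul_tsum {c : ℝ≥0∞} {s : ℝ} (hs0 : 0 < s) (hs2 : s ≤ 2)
    {m a b : ι → ℝ≥0∞} (h : ∀ i, c * m i ^ s ≤ a i * b i) :
    c * (∑' i, m i) ^ s ≤ (∑' i, a i) * ∑' i, b i := by
  have hhalf : (0 : ℝ) < 1 / 2 := by norm_num
  have hroot (x : ℝ≥0∞) : (c * x ^ s) ^ (1 / 2 : ℝ) = c ^ (1 / 2 : ℝ) * x ^ (s / 2) := by
    rw [mul_rpow_of_nonneg _ _ hhalf.le, ← rpow_mul]; ring_nf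
  rw [← rpow_le_rpow_iff hhalf, hroot, mul_rpow_of_nonneg _ _ hhalf.le]
  calc c ^ (1 / 2 : ℝ) * (∑' i, m i) ^ (s / 2)
      ≤ c ^ (1 / 2 : ℝ) * ∑' i, m i ^ (s / 2) := by
        gcongr; exact rpow_tsum_le_tsum_rpow (by positivity) (by linarith) m
    _ = ∑' i, (c * m i ^ s) ^ (1 / 2 : ℝ) := by simp only [hroot, ENNReal.tsum_mul_left]
    _ ≤ ∑' i, (a i * b i) ^ (1 / 2 : ℝ) :=
        ENNReal.tsum_le_tsum fun i => rpow_le_rpow (h i) hhalf.le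
    _ ≤ (∑' i, a i) ^ (1 / 2 : ℝ) * (∑' i, b i) ^ (1 / 2 : ℝ) := tsum_mul_rpow_half_le a b

end ENNReal

theorem MeasureTheory.mul_measure_iUnion_rpow_le {X ι : Type*} [MeasurableSpace X]
    {μ : Measure X} [Countable ι] {R : ι → Set X} (hR : ∀ i, MeasurableSet (R i))
    (hd : Pairwise (Disjoint on R)) (f g : X → ℝ≥0∞) {c : ℝ≥0∞} {s : ℝ} (hs0 : 0 < s)
    (hs2 : s ≤ 2) (h : ∀ i, c * μ (R i) ^ s ≤ (∫⁻ x in R i, f x ∂μ) * ∫⁻ x in R i, g x ∂μ) :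
    c * μ (⋃ i, R i) ^ s ≤ (∫⁻ x in ⋃ i, R i, f x ∂μ) * ∫⁻ x in ⋃ i, R i, g x ∂μ := by
  rw [measure_iUnion hd hR, lintegral_iUnion hR hd, lintegral_iUnion hR hd]
  exact ENNReal.mul_tsum_rpow_le_tsum_mul_tsum hs0 hs2 h

section cube

variable {n : ℕ}

lemma cube_eq_pi (c : Rn n) (l : ℝ) : cube c l = univ.pi fun i => Ico (c i) (c i + l) := by
  ext x; simp [cube, Set.mem_pi]

lemma measurableSet_cube (c : Rn n) (l : ℝ) : MeasurableSet (cube c l) := by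
  rw [cube_eq_pi]; exact .univ_pi fun _ => measurableSet_Ico

lemma volume_cube (c : Rn n) (l : ℝ) : volume (cube c l) = ENNReal.ofReal l ^ n := by
  simp [cube_eq_pi, volume_pi_pi, Real.volume_Ico]

lemma mem_cube_self (c : Rn n) {l : ℝ} (hl : 0 < l) : c ∈ cube c l :=
  fun _ => ⟨le_rfl, by linarith⟩

lemma interior_cube_nonempty (c : Rn n) {l : ℝ} (hl : 0 < l) : (interior (cube c l)).Nonempty := by
  refine ⟨c + fun _ => l / 2, mem_interior.2 ⟨univ.pi fun i => Ioo (c i) (c i + l), ?_, ?_, ?_⟩⟩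
  · rw [cube_eq_pi]; exact pi_mono fun _ _ => Ioo_subset_Ico_self
  · exact isOpen_set_pi finite_univ fun _ _ => isOpen_Ioo
  · intro i _; simp only [Pi.add_apply, mem_Ioo]; constructor <;> linarith

lemma cube_subset_cube_iff {c c' : Rn n} {l l' : ℝ} (hl : 0 < l) :
    cube c l ⊆ cube c' l' ↔ ∀ i, c' i ≤ c i ∧ c i + l ≤ c' i + l' := by
  have hne : cube c l ≠ ∅ := (nonempty_of_mem (mem_cube_self c hl)).ne_empty
  rw [cube_eq_pi] at hne ⊢
  rw [cube_eq_pi, pi_subset_pi_iff, or_iff_left hne]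
  simp only [mem_univ, true_implies, Ico_subset_Ico_iff (lt_add_of_pos_right _ hl)]

lemma cube_eq_of_subset_of_le (hn : 0 < n) {c c' : Rn n} {l l' : ℝ} (hl : 0 < l)
    (h : cube c l ⊆ cube c' l') (hle : l' ≤ l) : cube c l = cube c' l' := by
  rw [cube_subset_cube_iff hl] at h
  have hl' : l = l' := by
    have := h ⟨0, hn⟩
    linarith
  have hc : c = c' := funext fun i => by linarith [h i]
  rw [hl', hc]

end cube

lemma exists_scale_bound {n : ℕ} (hn : 0 < n) {V : ℝ≥0∞} (hV : V ≠ ∞) :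
    ∃ m : ℤ, ∀ (c : Rn n) (k : ℤ), volume (cube c ((2 : ℝ) ^ k)) ≤ V → k ≤ m := by
  obtain ⟨N, hN⟩ := ENNReal.exists_nat_gt hV
  refine ⟨N, fun c k hk => ?_⟩
  by_contra! hNk
  have h2k : (N : ℝ) < 2 ^ k :=
    calc (N : ℝ) < 2 ^ N := by exact_mod_cast Nat.lt_two_pow_self
      _ = 2 ^ (N : ℤ) := (zpow_natCast 2 N).symm
      _ ≤ 2 ^ k := zpow_le_zpow_right₀ one_le_two hNk.le
  have h1 : 1 ≤ ENNReal.ofReal (2 ^ k) :=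
    ENNReal.one_le_ofReal.2 (one_le_zpow₀ one_le_two (by omega))
  refine hk.not_gt (hN.trans_le ?_)
  calc (N : ℝ≥0∞) = ENNReal.ofReal N := (ENNReal.ofReal_natCast N).symm
    _ ≤ ENNReal.ofReal (2 ^ k) := ENNReal.ofReal_le_ofReal h2k.le
    _ ≤ ENNReal.ofReal (2 ^ k) ^ n := le_self_pow₀ h1 hn.ne'
    _ = volume (cube c ((2 : ℝ) ^ k)) := (volume_cube c _).symm

namespace IsDyadicGrid

variable {n : ℕ} {𝒟 : Set (Set (Rn n))}

lemma subset_or_superset (hD : IsDyadicGrid 𝒟) {Q R : Set (Rn n)} (hQ : Q ∈ 𝒟) (hR : R ∈ 𝒟)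
    {x : Rn n} (hxQ : x ∈ Q) (hxR : x ∈ R) : Q ⊆ R ∨ R ⊆ Q := by
  rcases hD.2.1 Q hQ R hR with h | h | h
  · exact .inl (inter_eq_left.1 h)
  · exact .inr (inter_eq_right.1 h)
  · exact absurd (h ▸ mem_inter hxQ hxR) (notMem_empty x)

lemma measurableSet (hD : IsDyadicGrid 𝒟) {Q : Set (Rn n)} (hQ : Q ∈ 𝒟) : MeasurableSet Q := by
  obtain ⟨c, k, rfl⟩ := hD.1 Q hQ
  exact measurableSet_cube c _

lemma volume_ne_zero (hD : IsDyadicGrid 𝒟) {Q : Set (Rn n)} (hQ : Q ∈ 𝒟) : volume Q ≠ 0 := by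
  obtain ⟨c, k, rfl⟩ := hD.1 Q hQ
  simp [volume_cube, (zpow_pos (two_pos (α := ℝ)) k).not_ge]

lemma volume_ne_top (hD : IsDyadicGrid 𝒟) {Q : Set (Rn n)} (hQ : Q ∈ 𝒟) : volume Q ≠ ∞ := by
  obtain ⟨c, k, rfl⟩ := hD.1 Q hQ
  simp [volume_cube]

lemma countable_of_pairwiseDisjoint (hD : IsDyadicGrid 𝒟) {P : Set (Set (Rn n))} (hP : P ⊆ 𝒟)
    (hd : P.PairwiseDisjoint id) : P.Countable := by
  refine hd.countable_of_nonempty_interior fun Q hQ => ?_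
  obtain ⟨c, k, rfl⟩ := hD.1 Q (hP hQ)
  exact interior_cube_nonempty c (zpow_pos two_pos k)

lemma pairwiseDisjoint_maximal (hD : IsDyadicGrid 𝒟) (P : Set (Set (Rn n))) (hP : P ⊆ 𝒟) :
    {Q | Maximal (· ∈ P) Q}.PairwiseDisjoint id := by
  intro Q hQ R hR hne
  refine Set.disjoint_left.2 fun x hxQ hxR => ?_
  rcases hD.subset_or_superset (hP hQ.prop) (hP hR.prop) hxQ hxR with h | h
  · exact hne (hQ.eq_of_le hR.prop h)
  · exact hne (hR.eq_of_le hQ.prop h).symm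

/-- The cubes of `P` containing `Q` are nested and have bounded scale; take the largest. -/
lemma exists_maximal_superset (hD : IsDyadicGrid 𝒟) (hn : 0 < n) {P : Set (Set (Rn n))}
    (hP : P ⊆ 𝒟) {V : ℝ≥0∞} (hV : V ≠ ∞) (hvol : ∀ R ∈ P, volume R ≤ V) {Q : Set (Rn n)}
    (hQ : Q ∈ P) : ∃ R, Maximal (· ∈ P) R ∧ Q ⊆ R := by
  let scales : Set ℤ := {k | ∃ R ∈ P, Q ⊆ R ∧ ∃ c, R = cube c ((2 : ℝ) ^ k)}
  obtain ⟨m, hm⟩ := exists_scale_bound hn hV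
  have hne : scales.Nonempty := by
    obtain ⟨c, k, hc⟩ := hD.1 Q (hP hQ)
    exact ⟨k, Q, hQ, subset_rfl, c, hc⟩
  have hbdd : ∀ k ∈ scales, k ≤ m := by
    rintro k ⟨R, hR, -, c, rfl⟩
    exact hm c k (hvol _ hR)
  obtain ⟨k, ⟨R, hR, hQR, c, rfl⟩, hkmax⟩ := Int.exists_greatest_of_bdd ⟨m, hbdd⟩ hne
  refine ⟨_, ⟨hR, fun R' hR' hRR' => ?_⟩, hQR⟩
  obtain ⟨c', k', rfl⟩ := hD.1 R' (hP hR')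
  have hk' : k' ≤ k := hkmax k' ⟨_, hR', hQR.trans hRR', c', rfl⟩
  exact (cube_eq_of_subset_of_le hn (zpow_pos two_pos k) hRR'
    (zpow_le_zpow_right₀ one_le_two hk')).ge

end IsDyadicGrid

lemma two_sub_div_pos {n : ℕ} (hn : 0 < n) {α : ℝ} (hα : α < 2 * n) : 0 < 2 - α / n := by
  have : α / n < 2 := by rw [div_lt_iff₀ (by exact_mod_cast hn)]; linarith
  linarith

lemma two_sub_div_le_two (n : ℕ) {α : ℝ} (hα0 : 0 ≤ α) : 2 - α / n ≤ 2 := by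
  have : 0 ≤ α / n := by positivity
  linarith

section fractional

variable {n : ℕ} {α : ℝ} {𝒟 : Set (Set (Rn n))} {g₁ g₂ : Rn n → ℝ≥0∞} {lam : ℝ≥0∞}
  {Q : Set (Rn n)} {x : Rn n}

def fracAvg (n : ℕ) (α : ℝ) (g₁ g₂ : Rn n → ℝ≥0∞) (Q : Set (Rn n)) : ℝ≥0∞ :=
  (volume Q ^ (-(1 - α / (2 * (n : ℝ)))) * ∫⁻ y in Q, g₁ y) *
    (volume Q ^ (-(1 - α / (2 * (n : ℝ)))) * ∫⁻ y in Q, g₂ y)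

lemma fracAvg_le_M2D (hQ : Q ∈ 𝒟) (hx : x ∈ Q) : fracAvg n α g₁ g₂ Q ≤ M2D n α 𝒟 g₁ g₂ x :=
  le_iSup₂_of_le Q hQ (le_iSup_of_le hx le_rfl)

lemma lt_M2D_iff : lam < M2D n α 𝒟 g₁ g₂ x ↔ ∃ Q ∈ 𝒟, x ∈ Q ∧ lam < fracAvg n α g₁ g₂ Q := by
  simp only [M2D, lt_iSup_iff, exists_prop]
  rfl

lemma fracAvg_eq (h0 : volume Q ≠ 0) (htop : volume Q ≠ ∞) :
    fracAvg n α g₁ g₂ Q = volume Q ^ (α / n - 2) * (∫⁻ y in Q, g₁ y) * ∫⁻ y in Q, g₂ y := by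
  rw [show α / n - 2 = -(1 - α / (2 * n)) + -(1 - α / (2 * n)) by ring,
    ENNReal.rpow_add _ _ h0 htop, fracAvg]
  ring

lemma le_fracAvg_iff (h0 : volume Q ≠ 0) (htop : volume Q ≠ ∞) :
    lam ≤ fracAvg n α g₁ g₂ Q ↔
      lam * volume Q ^ (2 - α / n) ≤ (∫⁻ y in Q, g₁ y) * ∫⁻ y in Q, g₂ y := by
  rw [fracAvg_eq h0 htop, show α / n - 2 = -(2 - α / n) by ring, ENNReal.rpow_neg, mul_assoc,
    mul_comm, ← div_eq_mul_inv, ENNReal.le_div_iff_mul_le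
      (.inl (ENNReal.rpow_pos (pos_iff_ne_zero.2 h0) htop).ne')
      (.inl (ENNReal.rpow_ne_top_of_ne_zero h0 htop))]

end fractional

section levelSet

variable {n : ℕ} {α : ℝ} {𝒟 : Set (Set (Rn n))} {g₁ g₂ : Rn n → ℝ≥0∞} {lam : ℝ≥0∞}
  {Q : Set (Rn n)} {x : Rn n}

def levelSet (n : ℕ) (α : ℝ) (𝒟 : Set (Set (Rn n))) (g₁ g₂ : Rn n → ℝ≥0∞) (lam : ℝ≥0∞) :
    Set (Rn n) :=
  {x | lam < M2D n α 𝒟 g₁ g₂ x}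

def heavyCubes (n : ℕ) (α : ℝ) (𝒟 : Set (Set (Rn n))) (g₁ g₂ : Rn n → ℝ≥0∞) (lam : ℝ≥0∞) :
    Set (Set (Rn n)) :=
  {Q | Q ∈ 𝒟 ∧ lam < fracAvg n α g₁ g₂ Q}

lemma subset_levelSet_of_mem_heavyCubes (hQ : Q ∈ heavyCubes n α 𝒟 g₁ g₂ lam) :
    Q ⊆ levelSet n α 𝒟 g₁ g₂ lam :=
  fun _ hx => hQ.2.trans_le (fracAvg_le_M2D hQ.1 hx)

lemma mul_volume_rpow_le_of_mem_heavyCubes (hD : IsDyadicGrid 𝒟)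
    (hQ : Q ∈ heavyCubes n α 𝒟 g₁ g₂ lam) :
    lam * volume Q ^ (2 - α / n) ≤ (∫⁻ y in Q, g₁ y) * ∫⁻ y in Q, g₂ y :=
  (le_fracAvg_iff (hD.volume_ne_zero hQ.1) (hD.volume_ne_top hQ.1)).1 hQ.2.le

lemma exists_maximal_heavyCube (hn : 0 < n) (hD : IsDyadicGrid 𝒟) (hα : α < 2 * n)
    (hI₁ : ∫⁻ y, g₁ y ≠ ∞) (hI₂ : ∫⁻ y, g₂ y ≠ ∞) (hlam : lam ≠ 0)
    (hQ : Q ∈ heavyCubes n α 𝒟 g₁ g₂ lam) :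
    ∃ R, Maximal (· ∈ heavyCubes n α 𝒟 g₁ g₂ lam) R ∧ Q ⊆ R := by
  have hs := two_sub_div_pos hn hα
  refine hD.exists_maximal_superset hn (fun _ hR => hR.1)
    (V := (lam⁻¹ * ((∫⁻ y, g₁ y) * ∫⁻ y, g₂ y)) ^ (2 - α / n)⁻¹)
    (ENNReal.rpow_ne_top_of_nonneg (by positivity)
      (ENNReal.mul_ne_top (ENNReal.inv_ne_top.2 hlam) (ENNReal.mul_ne_top hI₁ hI₂)))
    (fun R hR => ?_) hQ
  rw [← ENNReal.rpow_le_rpow_iff hs, ← ENNReal.rpow_mul, inv_mul_cancel₀ hs.ne',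
    ENNReal.rpow_one, ← ENNReal.div_eq_inv_mul, ENNReal.le_div_iff_mul_le (.inl hlam)
      (.inr (ENNReal.mul_ne_top hI₁ hI₂)), mul_comm]
  exact (mul_volume_rpow_le_of_mem_heavyCubes hD hR).trans
    (mul_le_mul' (setLIntegral_le_lintegral _ _) (setLIntegral_le_lintegral _ _))

lemma mul_volume_sUnion_rpow_le (hn : 0 < n) (hD : IsDyadicGrid 𝒟) (hα0 : 0 ≤ α)
    (hα : α < 2 * n) {G : Set (Set (Rn n))}
    (hG : G ⊆ {R | Maximal (· ∈ heavyCubes n α 𝒟 g₁ g₂ lam) R}) :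
    lam * volume (⋃₀ G) ^ (2 - α / n) ≤ (∫⁻ y in ⋃₀ G, g₁ y) * ∫⁻ y in ⋃₀ G, g₂ y := by
  have hdisj : G.PairwiseDisjoint id :=
    (hD.pairwiseDisjoint_maximal _ fun _ hR => hR.1).subset hG
  have := (hD.countable_of_pairwiseDisjoint (fun R hR => (hG hR).prop.1) hdisj).to_subtype
  rw [sUnion_eq_iUnion]
  exact mul_measure_iUnion_rpow_le (fun R => hD.measurableSet (hG R.2).prop.1)
    (hdisj.subtype _ _) g₁ g₂ (two_sub_div_pos hn hα) (two_sub_div_le_two n hα0)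
    fun R => mul_volume_rpow_le_of_mem_heavyCubes hD (hG R.2).prop

lemma mul_volume_levelSet_rpow_le (hn : 0 < n) (hD : IsDyadicGrid 𝒟) (hα0 : 0 ≤ α)
    (hα : α < 2 * n) (hI₁ : ∫⁻ y, g₁ y ≠ ∞) (hI₂ : ∫⁻ y, g₂ y ≠ ∞) (lam : ℝ≥0∞) :
    lam * volume (levelSet n α 𝒟 g₁ g₂ lam) ^ (2 - α / n) ≤ (∫⁻ y, g₁ y) * ∫⁻ y, g₂ y := by
  rcases eq_or_ne lam 0 with rfl | hlam
  · simp
  let G := {R | Maximal (· ∈ heavyCubes n α 𝒟 g₁ g₂ lam) R}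
  have hcover : levelSet n α 𝒟 g₁ g₂ lam ⊆ ⋃₀ G := by
    intro x hx
    obtain ⟨Q, hQ, hxQ, hQlam⟩ := lt_M2D_iff.1 hx
    obtain ⟨R, hR, hQR⟩ := exists_maximal_heavyCube hn hD hα hI₁ hI₂ hlam ⟨hQ, hQlam⟩
    exact ⟨R, hR, hQR hxQ⟩
  calc lam * volume (levelSet n α 𝒟 g₁ g₂ lam) ^ (2 - α / n)
      ≤ lam * volume (⋃₀ G) ^ (2 - α / n) := by
        gcongr
        exact (two_sub_div_pos hn hα).le
    _ ≤ (∫⁻ y in ⋃₀ G, g₁ y) * ∫⁻ y in ⋃₀ G, g₂ y :=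
        mul_volume_sUnion_rpow_le hn hD hα0 hα subset_rfl
    _ ≤ (∫⁻ y, g₁ y) * ∫⁻ y, g₂ y :=
        mul_le_mul' (setLIntegral_le_lintegral _ _) (setLIntegral_le_lintegral _ _)

lemma volume_levelSet_ne_top (hn : 0 < n) (hD : IsDyadicGrid 𝒟) (hα0 : 0 ≤ α)
    (hα : α < 2 * n) (hI₁ : ∫⁻ y, g₁ y ≠ ∞) (hI₂ : ∫⁻ y, g₂ y ≠ ∞) (hlam : lam ≠ 0) :
    volume (levelSet n α 𝒟 g₁ g₂ lam) ≠ ∞ := by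
  intro htop
  have h := mul_volume_levelSet_rpow_le hn hD hα0 hα hI₁ hI₂ lam
  rw [htop, ENNReal.top_rpow_of_pos (two_sub_div_pos hn hα), ENNReal.mul_top hlam, top_le_iff]
    at h
  exact ENNReal.mul_ne_top hI₁ hI₂ h

lemma ae_M2D_ne_top (hn : 0 < n) (hD : IsDyadicGrid 𝒟) (hα0 : 0 ≤ α) (hα : α < 2 * n)
    (hI₁ : ∫⁻ y, g₁ y ≠ ∞) (hI₂ : ∫⁻ y, g₂ y ≠ ∞) : ∀ᵐ x, M2D n α 𝒟 g₁ g₂ x ≠ ∞ := by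
  have hs := two_sub_div_pos hn hα
  rw [ae_iff]
  simp only [ne_eq, not_not]
  by_contra hpos
  obtain ⟨N, hN⟩ := ENNReal.exists_nat_mul_gt
    (mt (ENNReal.rpow_eq_zero_iff_of_pos hs).1 hpos) (ENNReal.mul_ne_top hI₁ hI₂)
  refine hN.not_ge (le_trans ?_ (mul_volume_levelSet_rpow_le hn hD hα0 hα hI₁ hI₂ N))
  gcongr
  intro x (hx : M2D n α 𝒟 g₁ g₂ x = ∞)
  show (N : ℝ≥0∞) < M2D n α 𝒟 g₁ g₂ x
  exact hx ▸ ENNReal.natCast_lt_top N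

lemma exists_maximal_levelSet_cube (hn : 0 < n) (hD : IsDyadicGrid 𝒟) (hα0 : 0 ≤ α)
    (hα : α < 2 * n) (hI₁ : ∫⁻ y, g₁ y ≠ ∞) (hI₂ : ∫⁻ y, g₂ y ≠ ∞) (hlam : lam ≠ 0)
    (hx : x ∈ levelSet n α 𝒟 g₁ g₂ lam) :
    ∃ Q, Maximal (fun R => R ∈ 𝒟 ∧ R ⊆ levelSet n α 𝒟 g₁ g₂ lam) Q ∧ x ∈ Q := by
  obtain ⟨P, hP, hxP, hPlam⟩ := lt_M2D_iff.1 hx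
  obtain ⟨Q, hQ, hPQ⟩ := hD.exists_maximal_superset hn (P := {R | R ∈ 𝒟 ∧ _})
    (fun _ hR => hR.1) (volume_levelSet_ne_top hn hD hα0 hα hI₁ hI₂ hlam)
    (fun _ hR => measure_mono hR.2) ⟨hP, subset_levelSet_of_mem_heavyCubes ⟨hP, hPlam⟩⟩
  exact ⟨Q, hQ, hPQ hxP⟩

/-- If `fracAvg Q ≤ λ`, no heavy cube contains `Q`, so `Q` is the union of the maximal heavy
cubes inside it. -/
lemma le_fracAvg_of_maximal (hn : 0 < n) (hD : IsDyadicGrid 𝒟) (hα0 : 0 ≤ α)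
    (hα : α < 2 * n) (hI₁ : ∫⁻ y, g₁ y ≠ ∞) (hI₂ : ∫⁻ y, g₂ y ≠ ∞)
    (hQ : Maximal (fun R => R ∈ 𝒟 ∧ R ⊆ levelSet n α 𝒟 g₁ g₂ lam) Q) :
    lam ≤ fracAvg n α g₁ g₂ Q := by
  rcases eq_or_ne lam 0 with rfl | hlam
  · exact zero_le
  by_cases hheavy : lam < fracAvg n α g₁ g₂ Q
  · exact hheavy.le
  let G := {R | Maximal (· ∈ heavyCubes n α 𝒟 g₁ g₂ lam) R ∧ R ⊆ Q}
  have hQG : Q = ⋃₀ G := by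
    refine (sUnion_subset fun R hR => hR.2).antisymm' fun y hy => ?_
    obtain ⟨P, hP, hyP, hPlam⟩ := lt_M2D_iff.1 (hQ.prop.2 hy)
    obtain ⟨R, hR, hPR⟩ := exists_maximal_heavyCube hn hD hα hI₁ hI₂ hlam ⟨hP, hPlam⟩
    refine ⟨R, ⟨hR, ?_⟩, hPR hyP⟩
    refine (hD.subset_or_superset hQ.prop.1 hR.prop.1 hy (hPR hyP)).resolve_left fun hQR => ?_
    have hRQ := hQ.eq_of_superset ⟨hR.prop.1, subset_levelSet_of_mem_heavyCubes hR.prop⟩ hQR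
    exact hheavy (hRQ ▸ hR.prop.2)
  rw [le_fracAvg_iff (hD.volume_ne_zero hQ.prop.1) (hD.volume_ne_top hQ.prop.1), hQG]
  exact mul_volume_sUnion_rpow_le hn hD hα0 hα fun R hR => hR.1

end levelSet

lemma ENNReal.eq_of_mem_Ioc_zpow {a y : ℝ≥0∞} (ha : 1 ≤ a) {j k : ℤ}
    (hj : y ∈ Ioc (a ^ j) (a ^ (j + 1))) (hk : y ∈ Ioc (a ^ k) (a ^ (k + 1))) : j = k := by
  have h1 : j < k + 1 := by
    by_contra! h
    exact (hj.1.trans_le hk.2).not_ge (ENNReal.zpow_le_of_le ha h)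
  have h2 : k < j + 1 := by
    by_contra! h
    exact (hk.1.trans_le hj.2).not_ge (ENNReal.zpow_le_of_le ha h)
  omega

lemma tsum_tsum_mul_indicator_eq {X : Type*} {S : ℤ → Set (Set X)} {Ω : ℤ → Set X}
    (w : Set X → ℝ≥0∞) {x : X} {k₀ : ℤ} {Q₀ : Set X} (hQ₀ : Q₀ ∈ S k₀)
    (hx : x ∈ Q₀ \ Ω (k₀ + 1)) (huniq : ∀ k, ∀ Q ∈ S k, x ∈ Q \ Ω (k + 1) → k = k₀ ∧ Q = Q₀) :
    ∑' k, ∑' Q : S k, w Q * ((Q : Set X) \ Ω (k + 1)).indicator (fun _ => 1) x = w Q₀ := by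
  rw [tsum_eq_single k₀, tsum_eq_single ⟨Q₀, hQ₀⟩]
  · simp [indicator_of_mem hx]
  · intro Q hQ
    rw [indicator_of_notMem fun hxQ => hQ (Subtype.ext (huniq _ _ Q.2 hxQ).2), mul_zero]
  · intro k hk
    refine ENNReal.tsum_eq_zero.2 fun Q => ?_
    rw [indicator_of_notMem fun hxQ => hk (huniq _ _ Q.2 hxQ).1, mul_zero]

lemma maximal_mem_and_subset_iff {X : Type*} {𝒟 : Set (Set X)} {E Q : Set X} :
    Maximal (fun R => R ∈ 𝒟 ∧ R ⊆ E) Q ↔ Q ∈ 𝒟 ∧ Q ⊆ E ∧ ∀ R ∈ 𝒟, Q ⊆ R → R ⊆ E → R = Q := by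
  rw [maximal_subset_iff]
  constructor
  · rintro ⟨⟨hQ, hQE⟩, h⟩
    exact ⟨hQ, hQE, fun R hR hQR hRE => (h ⟨hR, hRE⟩ hQR).symm⟩
  · rintro ⟨hQ, hQE, h⟩
    exact ⟨⟨hQ, hQE⟩, fun R ⟨hR, hRE⟩ hQR => (h R hR hQR hRE).symm⟩

/-- a.e. on `{ℳ^𝒟_α(g₁,g₂) > 0}`, the maximal function is
comparable to the sparse sum `∑_{k,j} (avg on Q_j^k) 1_{E(Q_j^k)}`. -/
theorem stmt6 (n : ℕ) (hn : 0 < n) (α : ℝ) (hα0 : 0 ≤ α) (hα : α < 2 * n) :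
    ∃ c C : ℝ≥0∞, 0 < c ∧ C ≠ ∞ ∧
      ∀ (𝒟 : Set (Set (Rn n))), IsDyadicGrid 𝒟 →
      ∀ (g₁ g₂ : Rn n → ℝ≥0∞), Measurable g₁ → Measurable g₂ →
        (∫⁻ x, g₁ x) ≠ ∞ → (∫⁻ x, g₂ x) ≠ ∞ →
        let a : ℝ≥0∞ := 2 ^ (((2:ℝ) - α / n) * ((n:ℝ) + 1))
        let Ω : ℤ → Set (Rn n) := fun k => {x | a ^ k < M2D n α 𝒟 g₁ g₂ x}
        let S : ℤ → Set (Set (Rn n)) := fun k =>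
          {Q | Q ∈ 𝒟 ∧ Q ⊆ Ω k ∧ ∀ R ∈ 𝒟, Q ⊆ R → R ⊆ Ω k → R = Q}
        let T : Rn n → ℝ≥0∞ := fun x => ∑' (k : ℤ), ∑' (Q : ↥(S k)),
          (volume (Q : Set (Rn n)) ^ (α / (n:ℝ) - 2) *
              (∫⁻ y in (Q : Set (Rn n)), g₁ y) * (∫⁻ y in (Q : Set (Rn n)), g₂ y)) *
            ((Q : Set (Rn n)) \ Ω (k+1)).indicator (fun _ => (1:ℝ≥0∞)) x
        ∀ᵐ x, 0 < M2D n α 𝒟 g₁ g₂ x →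
          c * M2D n α 𝒟 g₁ g₂ x ≤ T x ∧ T x ≤ C * M2D n α 𝒟 g₁ g₂ x := by
  have he : 0 < (2 - α / n) * (n + 1) := mul_pos (two_sub_div_pos hn hα) (by positivity)
  have hat : (2 : ℝ≥0∞) ^ ((2 - α / n) * (n + 1)) ≠ ∞ :=
    ENNReal.rpow_ne_top_of_nonneg he.le ENNReal.ofNat_ne_top
  refine ⟨_, 1, ENNReal.inv_pos.2 hat, ENNReal.one_ne_top, ?_⟩
  intro 𝒟 hD g₁ g₂ _ _ hI₁ hI₂ a Ω S T
  have ha1 : 1 < a := ENNReal.one_lt_rpow one_lt_two he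
  filter_upwards [ae_M2D_ne_top hn hD hα0 hα hI₁ hI₂] with x hfin hpos
  obtain ⟨k₀, hk₀⟩ := ENNReal.exists_mem_Ioc_zpow hpos.ne' hfin ha1 hat
  have ha0 : a ^ k₀ ≠ 0 := (ENNReal.zpow_pos (by positivity) hat k₀).ne'
  obtain ⟨Q₀, hQ₀, hxQ₀⟩ := exists_maximal_levelSet_cube hn hD hα0 hα hI₁ hI₂ ha0 hk₀.1
  have huniq : ∀ k, ∀ Q ∈ S k, x ∈ Q \ Ω (k + 1) → k = k₀ ∧ Q = Q₀ := by
    rintro k Q hQ ⟨hxQ, hxΩ⟩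
    have hk := ENNReal.eq_of_mem_Ioc_zpow ha1.le ⟨hQ.2.1 hxQ, not_lt.1 hxΩ⟩ hk₀
    rw [hk] at hQ
    exact ⟨hk, (hD.pairwiseDisjoint_maximal {R | R ∈ 𝒟 ∧ R ⊆ Ω k₀} fun _ hR => hR.1).elim_set
      (maximal_mem_and_subset_iff.2 hQ) hQ₀ x hxQ hxQ₀⟩
  have hT : T x = fracAvg n α g₁ g₂ Q₀ := by
    rw [fracAvg_eq (hD.volume_ne_zero hQ₀.prop.1) (hD.volume_ne_top hQ₀.prop.1)]
    exact tsum_tsum_mul_indicator_eq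
      (fun Q => volume Q ^ (α / n - 2) * (∫⁻ y in Q, g₁ y) * ∫⁻ y in Q, g₂ y)
      (maximal_mem_and_subset_iff.1 hQ₀) ⟨hxQ₀, hk₀.2.not_gt⟩ huniq
  rw [hT, one_mul]
  refine ⟨?_, fracAvg_le_M2D hQ₀.prop.1 hxQ₀⟩
  calc a⁻¹ * M2D n α 𝒟 g₁ g₂ x ≤ a⁻¹ * a ^ (k₀ + 1) := by gcongr; exact hk₀.2
    _ = a ^ k₀ := by
      rw [ENNReal.zpow_add (by positivity) hat, zpow_one, mul_comm, mul_assoc,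
        ENNReal.mul_inv_cancel (by positivity) hat, mul_one]
    _ ≤ fracAvg n α g₁ g₂ Q₀ := le_fracAvg_of_maximal hn hD hα0 hα hI₁ hI₂ hQ₀
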